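/- arXiv:1404.7671 — 8 statements merged into one kernel-verified Lean document; each statement's English description precedes it below -/
import Mathlib

section
/- Let m ≥ 1 be an integer and let p, q be real numbers with 0 < p, 0 < q and p ≠ q. Suppose μ : ℕ → ℝ satisfies μ(m) = 0, μ(0) = 1 + μ(1), and the recurrence (p + q)·μ(i) = 1 + p·μ(i+1) + q·μ(i−1) for all integers i with 1 ≤ i ≤ m−1. Then for every integer i with 0 ≤ i ≤ m, μ(i) = (1 + 1/(q − p)) · ((q/p)^m − (q/p)^i)/((q/p) − 1) − (m − i)/(q − p). -/
/-!
The increments `δ i = μ (i+1) - μ i` satisfy the first-order affine recurrence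
`δ (i+1) = (q/p) δ i - 1/p` with `δ 0 = -1`, whose fixed point is `1/(q-p)`; hence
`δ i = 1/(q-p) - (1 + 1/(q-p)) (q/p)^i`. Summing the increments from `i` to `m`, where `μ m = 0`,
gives the closed form via the geometric sum.
-/

open Finset

theorem sub_eq_pow_mul_of_affine_recurrence {R : Type*} [CommRing R] {a b c : R}
    (hc : a * c + b = c) {x : ℕ → R} {N : ℕ} (hx : ∀ n < N, x (n + 1) = a * x n + b) :
    ∀ n ≤ N, x n - c = a ^ n * (x 0 - c) := by
  intro n hn
  induction n with
  | zero => simp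
  | succ n ih =>
    rw [hx n hn, pow_succ', mul_assoc, ← ih (by omega)]
    linear_combination hc

theorem increment_eq_of_birthDeath_recurrence {m : ℕ} {p q : ℝ} (hp : p ≠ 0) (hpq : p ≠ q)
    {μ : ℕ → ℝ} (hμ0 : μ 0 = 1 + μ 1)
    (hrec : ∀ i : ℕ, 1 ≤ i → i ≤ m - 1 →
      (p + q) * μ i = 1 + p * μ (i + 1) + q * μ (i - 1)) :
    ∀ k < m, μ (k + 1) - μ k = 1 / (q - p) - (1 + 1 / (q - p)) * (q / p) ^ k := by
  have hqp : q - p ≠ 0 := sub_ne_zero.mpr hpq.symm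
  have hfix : q / p * (1 / (q - p)) + -(1 / p) = 1 / (q - p) := by
    field_simp
    ring
  have hstep : ∀ n < m - 1,
      μ (n + 1 + 1) - μ (n + 1) = q / p * (μ (n + 1) - μ n) + -(1 / p) := by
    intro n hn
    have h := hrec (n + 1) (by omega) (by omega)
    rw [Nat.add_sub_cancel] at h
    field_simp
    linear_combination -h
  intro k hk
  have h :=
    sub_eq_pow_mul_of_affine_recurrence (x := fun n => μ (n + 1) - μ n) hfix hstep k (by omega)
  rw [hμ0] at h
  linear_combination h

theorem stmt_1_general (m : ℕ) (p q : ℝ) (hp : 0 < p) (hpq : p ≠ q)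
    (μ : ℕ → ℝ) (hμm : μ m = 0) (hμ0 : μ 0 = 1 + μ 1)
    (hrec : ∀ i : ℕ, 1 ≤ i → i ≤ m - 1 →
      (p + q) * μ i = 1 + p * μ (i + 1) + q * μ (i - 1)) :
    ∀ i : ℕ, i ≤ m →
      μ i = (1 + 1 / (q - p)) * (((q / p) ^ m - (q / p) ^ i) / (q / p - 1))
        - ((m : ℝ) - (i : ℝ)) / (q - p) := by
  intro i hi
  have hratio : q / p ≠ 1 := by
    rw [Ne, div_eq_one_iff_eq hp.ne']
    exact hpq.symm
  have htel : μ m - μ i = ∑ k ∈ Ico i m, (μ (k + 1) - μ k) := (sum_Ico_sub μ hi).symm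
  rw [sum_congr rfl fun k hk => increment_eq_of_birthDeath_recurrence hp.ne' hpq hμ0 hrec k
      (mem_Ico.mp hk).2, sum_sub_distrib, ← mul_sum, geom_sum_Ico hratio hi] at htel
  simp only [sum_const, Nat.card_Ico, nsmul_eq_mul, Nat.cast_sub hi] at htel
  rw [hμm] at htel
  linear_combination -htel

/-- Expected time to absorption for a birth-death chain with a reflecting barrier at `S 0`,
constant up-probability `p` and down-probability `q` at interior states: the solution of
`μ m = 0`, `μ 0 = 1 + μ 1`, `(p+q)·μ i = 1 + p·μ (i+1) + q·μ (i-1)` for `1 ≤ i ≤ m-1`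
is `μ i = (1 + 1/(q-p)) · ((q/p)^m - (q/p)^i)/((q/p) - 1) - (m - i)/(q - p)`. -/
theorem stmt_1 (m : ℕ) (hm : 1 ≤ m) (p q : ℝ) (hp : 0 < p) (hq : 0 < q) (hpq : p ≠ q)
    (μ : ℕ → ℝ) (hμm : μ m = 0) (hμ0 : μ 0 = 1 + μ 1)
    (hrec : ∀ i : ℕ, 1 ≤ i → i ≤ m - 1 →
      (p + q) * μ i = 1 + p * μ (i + 1) + q * μ (i - 1)) :
    ∀ i : ℕ, i ≤ m →
      μ i = (1 + 1 / (q - p)) * (((q / p) ^ m - (q / p) ^ i) / (q / p - 1))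
        - ((m : ℝ) - (i : ℝ)) / (q - p) :=
  stmt_1_general m p q hp hpq μ hμm hμ0 hrec
end

section
/- Let m ≥ 1 be an integer and let p, q be real numbers with 0 < q < p and p + q ≤ 1. Suppose μ : ℕ → ℝ satisfies μ(m) = 0, μ(0) = 1 + μ(1), and the recurrence (p + q)·μ(i) = 1 + p·μ(i+1) + q·μ(i−1) for all integers i with 1 ≤ i ≤ m−1. Then for every integer i with 0 ≤ i ≤ m, μ(i) ≤ (m − i)/(p − q). -/
/-!
The increments `d i = μ i - μ (i + 1)` satisfy `d 0 = 1` and `p * d i = 1 + q * d (i - 1)`, and the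
map `y ↦ (1 + q * y) / p` preserves the bound `y ≤ 1 / (p - q)` (its fixed point). Since
`p - q ≤ 1`, every increment is at most `1 / (p - q)`, and summing the increments from `i` to
`m`, where `μ m = 0`, gives the claim.
-/

theorem le_inv_sub_of_mul_eq_one_add_mul {p q x y : ℝ} (hq : 0 ≤ q) (hqp : q < p)
    (hxy : p * x = 1 + q * y) (hy : y ≤ (p - q)⁻¹) : x ≤ (p - q)⁻¹ := by
  have hpq : 0 < p - q := sub_pos.mpr hqp
  have hp : 0 < p := hq.trans_lt hqp
  have hfix : p * (p - q)⁻¹ = 1 + q * (p - q)⁻¹ := by field_simp; ring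
  exact le_of_mul_le_mul_left (by nlinarith [mul_le_mul_of_nonneg_left hy hq]) hp

theorem sub_succ_le_inv_sub_of_recurrence {p q : ℝ} {μ : ℕ → ℝ} {m : ℕ} (hq : 0 ≤ q)
    (hqp : q < p) (h0 : μ 0 - μ 1 ≤ (p - q)⁻¹)
    (hrec : ∀ i : ℕ, 1 ≤ i → i < m → (p + q) * μ i = 1 + p * μ (i + 1) + q * μ (i - 1)) :
    ∀ k, k < m → μ k - μ (k + 1) ≤ (p - q)⁻¹ := by
  intro k
  induction k with
  | zero => exact fun _ => h0
  | succ k ih =>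
    intro hk
    have hk' := hrec (k + 1) (Nat.le_add_left 1 k) hk
    rw [Nat.add_sub_cancel] at hk'
    exact le_inv_sub_of_mul_eq_one_add_mul hq hqp (by linarith) (ih (by omega))

theorem le_add_mul_of_forall_sub_succ_le {f : ℕ → ℝ} {c : ℝ} {i m : ℕ} (him : i ≤ m)
    (h : ∀ k, i ≤ k → k < m → f k - f (k + 1) ≤ c) : f i ≤ f m + ((m : ℝ) - i) * c := by
  induction m, him using Nat.le_induction with
  | base => simp
  | succ m him ih =>
    have hm := h m him (Nat.lt_succ_self m)
    have ih := ih fun k hik hkm => h k hik (Nat.lt_succ_of_lt hkm)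
    push_cast
    linarith

theorem stmt_2_general (m : ℕ) (p q : ℝ) (hq : 0 < q) (hqp : q < p) (hpq1 : p + q ≤ 1)
    (μ : ℕ → ℝ) (hμm : μ m = 0) (hμ0 : μ 0 = 1 + μ 1)
    (hrec : ∀ i : ℕ, 1 ≤ i → i ≤ m - 1 →
      (p + q) * μ i = 1 + p * μ (i + 1) + q * μ (i - 1)) :
    ∀ i : ℕ, i ≤ m → μ i ≤ ((m : ℝ) - (i : ℝ)) / (p - q) := by
  intro i hi
  have h0 : μ 0 - μ 1 ≤ (p - q)⁻¹ := by
    rw [hμ0, add_sub_cancel_right, one_le_inv₀ (sub_pos.mpr hqp)]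
    linarith
  have hstep := sub_succ_le_inv_sub_of_recurrence (m := m) hq.le hqp h0
    fun j hj hjm => hrec j hj (by omega)
  calc μ i ≤ μ m + ((m : ℝ) - i) * (p - q)⁻¹ :=
        le_add_mul_of_forall_sub_succ_le hi fun k _ hk => hstep k hk
    _ = ((m : ℝ) - i) / (p - q) := by rw [hμm, zero_add, div_eq_mul_inv]

/-- Part (a) of the expected-time-to-absorption lemma: if the backward bias `q/p` is
less than one, the expected hitting time of `S m` from `S i` is at most `(m - i)/(p - q)`. -/
theorem stmt_2 (m : ℕ) (hm : 1 ≤ m) (p q : ℝ) (hq : 0 < q) (hqp : q < p) (hpq1 : p + q ≤ 1)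
    (μ : ℕ → ℝ) (hμm : μ m = 0) (hμ0 : μ 0 = 1 + μ 1)
    (hrec : ∀ i : ℕ, 1 ≤ i → i ≤ m - 1 →
      (p + q) * μ i = 1 + p * μ (i + 1) + q * μ (i - 1)) :
    ∀ i : ℕ, i ≤ m → μ i ≤ ((m : ℝ) - (i : ℝ)) / (p - q) :=
  stmt_2_general m p q hq hqp hpq1 μ hμm hμ0 hrec
end

section
/- Let m ≥ 1 be an integer and let p, q be real numbers with 0 < p < q and p + q ≤ 1. Suppose μ : ℕ → ℝ satisfies μ(m) = 0, μ(0) = 1 + μ(1), and the recurrence (p + q)·μ(i) = 1 + p·μ(i+1) + q·μ(i−1) for all integers i with 1 ≤ i ≤ m−1. Then μ(1) ≥ ((q/p)^m − (q/p))/((q/p) − 1) − (m − 1)/(q − p). -/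
/-!
The increments `d i = μ i - μ (i + 1)` satisfy the affine recurrence `p d (i + 1) = 1 + q d i`
with `d 0 = 1`, so `d i = (1 + 1/(q - p)) (q/p)^i - 1/(q - p)`. Summing `d 1, …, d (m - 1)`
gives the exact formula for `μ 1`, and the bound follows since `1 + 1/(q - p) ≥ 1` and the
geometric sum is nonnegative.
-/

open Finset

/-- The fixed point of the recurrence is `-1/(q - p)`, and the deviation from it is multiplied
by `q/p` at each step. -/
lemma eq_geom_sub_of_mul_succ_eq_one_add_mul {p q : ℝ} (hp : p ≠ 0) (hqp : q - p ≠ 0)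
    {d : ℕ → ℝ} {n : ℕ} (hd : ∀ i, i + 1 < n → p * d (i + 1) = 1 + q * d i) :
    ∀ i < n, d i = (d 0 + 1 / (q - p)) * (q / p) ^ i - 1 / (q - p) := by
  intro i hi
  induction i with
  | zero => ring
  | succ i ih =>
    have hstep : d (i + 1) + 1 / (q - p) = q / p * (d i + 1 / (q - p)) := by
      field_simp
      linear_combination (q - p) * hd i hi
    rw [ih (by omega)] at hstep
    linear_combination hstep

lemma hitting_time_diff_succ {p q : ℝ} {m : ℕ} {μ : ℕ → ℝ}
    (hrec : ∀ i : ℕ, 1 ≤ i → i ≤ m - 1 →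
      (p + q) * μ i = 1 + p * μ (i + 1) + q * μ (i - 1))
    {i : ℕ} (hi : i + 1 < m) :
    p * (μ (i + 1) - μ (i + 2)) = 1 + q * (μ i - μ (i + 1)) := by
  have h := hrec (i + 1) (by omega) (by omega)
  rw [Nat.add_sub_cancel] at h
  linear_combination h

lemma hitting_time_one_eq {m : ℕ} (hm : 1 ≤ m) {p q : ℝ} (hp : p ≠ 0) (hqp : q ≠ p)
    {μ : ℕ → ℝ} (hμm : μ m = 0) (hμ0 : μ 0 = 1 + μ 1)
    (hrec : ∀ i : ℕ, 1 ≤ i → i ≤ m - 1 →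
      (p + q) * μ i = 1 + p * μ (i + 1) + q * μ (i - 1)) :
    μ 1 = (1 + 1 / (q - p)) * (((q / p) ^ m - q / p) / (q / p - 1))
      - ((m : ℝ) - 1) / (q - p) := by
  have hqp' : q - p ≠ 0 := sub_ne_zero.2 hqp
  have hr : q / p ≠ 1 := fun h => hqp ((div_eq_one_iff_eq hp).1 h)
  have hdiff := eq_geom_sub_of_mul_succ_eq_one_add_mul (d := fun i => μ i - μ (i + 1)) hp hqp'
    (fun i hi => hitting_time_diff_succ hrec hi)
  have htelescope : μ 1 = ∑ i ∈ Ico 1 m, (μ i - μ (i + 1)) := by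
    rw [← neg_neg (∑ i ∈ Ico 1 m, _), ← sum_neg_distrib]
    simp only [neg_sub]
    rw [sum_Ico_sub μ hm, hμm, zero_sub, neg_neg]
  rw [htelescope, sum_congr rfl fun i hi => hdiff i (mem_Ico.1 hi).2, sum_sub_distrib,
    ← mul_sum, geom_sum_Ico hr hm, sum_const, Nat.card_Ico, nsmul_eq_mul,
    Nat.cast_sub hm, hμ0]
  simp only [zero_add, add_sub_cancel_right, Nat.cast_one, pow_one]
  ring

theorem stmt_3_general (m : ℕ) (hm : 1 ≤ m) (p q : ℝ) (hp : 0 < p) (hpq : p < q)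
    (μ : ℕ → ℝ) (hμm : μ m = 0) (hμ0 : μ 0 = 1 + μ 1)
    (hrec : ∀ i : ℕ, 1 ≤ i → i ≤ m - 1 →
      (p + q) * μ i = 1 + p * μ (i + 1) + q * μ (i - 1)) :
    μ 1 ≥ ((q / p) ^ m - q / p) / (q / p - 1) - ((m : ℝ) - 1) / (q - p) := by
  rw [hitting_time_one_eq hm hp.ne' hpq.ne' hμm hμ0 hrec]
  have hr : 1 < q / p := (one_lt_div hp).2 hpq
  have hgeom : 0 ≤ ((q / p) ^ m - q / p) / (q / p - 1) :=
    div_nonneg (by simpa using pow_le_pow_right₀ hr.le hm) (by linarith)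
  have hc : 0 ≤ 1 / (q - p) := one_div_nonneg.2 (sub_pos.2 hpq).le
  linarith [mul_nonneg hc hgeom]

/-- Part (b) of the expected-time-to-absorption lemma: if the backward bias `q/p` exceeds
one, the expected hitting time of `S m` from `S 1` is at least
`((q/p)^m - (q/p))/((q/p) - 1) - (m - 1)/(q - p)`. -/
theorem stmt_3 (m : ℕ) (hm : 1 ≤ m) (p q : ℝ) (hp : 0 < p) (hpq : p < q) (hpq1 : p + q ≤ 1)
    (μ : ℕ → ℝ) (hμm : μ m = 0) (hμ0 : μ 0 = 1 + μ 1)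
    (hrec : ∀ i : ℕ, 1 ≤ i → i ≤ m - 1 →
      (p + q) * μ i = 1 + p * μ (i + 1) + q * μ (i - 1)) :
    μ 1 ≥ ((q / p) ^ m - q / p) / (q / p - 1) - ((m : ℝ) - 1) / (q - p) :=
  stmt_3_general m hm p q hp hpq μ hμm hμ0 hrec
end

section
/- Let k and ℓ be integers with 1 ≤ k < ℓ. Then Σ_{i=1}^{k} 1/((ℓ − i + 1)·(k − i + 1)) ≤ (1 + ln k)/(ℓ − k), where ln denotes the natural logarithm. -/
/-! Since `ℓ - i + 1 ≥ ℓ - k`, the sum is at most `H_k / (ℓ - k)`, where `H_k` is the harmonic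
number (reindex by `i ↦ k + 1 - i`), and `H_k ≤ 1 + ln k`. -/

open Finset

lemma sum_Icc_inv_sub_add_one_eq_harmonic (k : ℕ) :
    ∑ i ∈ Icc 1 k, ((k : ℝ) - i + 1)⁻¹ = harmonic k := by
  rw [harmonic_eq_sum_Icc, Rat.cast_sum]
  refine sum_nbij' (fun i ↦ k + 1 - i) (fun j ↦ k + 1 - j) ?_ ?_ ?_ ?_ ?_ <;>
    simp only [mem_Icc]
  · omega
  · omega
  · omega
  · omega
  · intro i ⟨_, hik⟩
    rw [Rat.cast_inv, Rat.cast_natCast, Nat.cast_sub (by omega)]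
    push_cast
    ring

lemma one_div_mul_sub_add_one_le {k l i : ℕ} (hik : i ≤ k) (hkl : k < l) :
    (1 : ℝ) / ((l - i + 1) * (k - i + 1)) ≤ ((k : ℝ) - i + 1)⁻¹ / (l - k) := by
  have hik' : (i : ℝ) ≤ k := by exact_mod_cast hik
  have hkl' : (k : ℝ) < l := by exact_mod_cast hkl
  rw [inv_div_left, ← one_div]
  gcongr
  linarith

theorem stmt_7_general (k l : ℕ) (hkl : k < l) :
    ∑ i ∈ Finset.Icc 1 k,
        (1 : ℝ) / (((l : ℝ) - (i : ℝ) + 1) * ((k : ℝ) - (i : ℝ) + 1))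
      ≤ (1 + Real.log k) / ((l : ℝ) - (k : ℝ)) := by
  have hlk : (0 : ℝ) < l - k := sub_pos.mpr (by exact_mod_cast hkl)
  calc ∑ i ∈ Icc 1 k, (1 : ℝ) / ((l - i + 1) * (k - i + 1))
      ≤ ∑ i ∈ Icc 1 k, ((k : ℝ) - i + 1)⁻¹ / (l - k) :=
        sum_le_sum fun i hi ↦ one_div_mul_sub_add_one_le (mem_Icc.mp hi).2 hkl
    _ = harmonic k / ((l : ℝ) - k) := by
        rw [← sum_div, sum_Icc_inv_sub_add_one_eq_harmonic]
    _ ≤ (1 + Real.log k) / ((l : ℝ) - k) := by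
        gcongr
        exact harmonic_le_one_add_log k

/-- The key estimate in the running-time analysis of the 4-state ambassador protocol on
the clique: for integers `1 ≤ k < ℓ`,
`∑_{i=1}^{k} 1/((ℓ-i+1)(k-i+1)) ≤ (1 + ln k)/(ℓ-k)`. -/
theorem stmt_7 (k l : ℕ) (hk : 1 ≤ k) (hkl : k < l) :
    ∑ i ∈ Finset.Icc 1 k,
        (1 : ℝ) / (((l : ℝ) - (i : ℝ) + 1) * ((k : ℝ) - (i : ℝ) + 1))
      ≤ (1 + Real.log k) / ((l : ℝ) - (k : ℝ)) :=
  stmt_7_general k l hkl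
end

section
/- There is no population protocol with exactly 3 states that stably computes the majority function in every 2-type population on every connected interaction graph. Precisely: for every state set Q with |Q| = 3, every transition function δ : Q × Q → Q × Q, every pair of distinct input states ι(g), ι(r) ∈ Q and every output function γ : Q → {g, r}, there exist a connected interaction graph G = (V, E), an initial configuration C_0 assigning each vertex one of ι(g), ι(r) with one of the two input types in strict majority, and a fair execution starting from C_0 that never reaches a configuration C such that γ(C(v)) equals the initial majority type for all v ∈ V and such that every configuration reachable from C also has this property. -/
/-- One interaction step of a population protocol with transition function `δ` on an
interaction graph with edge relation `E`: some edge `(v,u)` is selected and the pair of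
states of `v` and `u` is updated according to `δ`, all other agents being unchanged. -/
def PPStep {V Q : Type*} (E : V → V → Prop) (δ : Q × Q → Q × Q) (C C' : V → Q) : Prop :=
  ∃ v u : V, v ≠ u ∧ E v u ∧ (C' v, C' u) = δ (C v, C u) ∧
    ∀ w : V, w ≠ v → w ≠ u → C' w = C w

/-- An execution of the protocol: at each time step either an interaction happens or the
configuration stays put (an interaction that changes nothing). -/
def PPExec {V Q : Type*} (E : V → V → Prop) (δ : Q × Q → Q × Q) (e : ℕ → V → Q) : Prop :=
  ∀ t : ℕ, PPStep E δ (e t) (e (t + 1)) ∨ e (t + 1) = e t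

/-- Fairness: any configuration directly reachable from a configuration occurring
infinitely often also occurs infinitely often. -/
def PPFair {V Q : Type*} (E : V → V → Prop) (δ : Q × Q → Q × Q) (e : ℕ → V → Q) : Prop :=
  ∀ C C' : V → Q, (∀ n : ℕ, ∃ t : ℕ, n ≤ t ∧ e t = C) → PPStep E δ C C' →
    ∀ n : ℕ, ∃ t : ℕ, n ≤ t ∧ e t = C'

/-- Configuration `C` is a stable correct output configuration for output value `b`:
every vertex outputs `b` in `C` and in every configuration reachable from `C`. -/
def PPStableOutput {V Q : Type*} (E : V → V → Prop) (δ : Q × Q → Q × Q)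
    (γ : Q → Bool) (b : Bool) (C : V → Q) : Prop :=
  ∀ C' : V → Q, Relation.ReflTransGen (PPStep E δ) C C' → ∀ v : V, γ (C' v) = b

/-!
By pigeonhole, one output value is produced by at most one state; exchanging the roles of the
two inputs we may assume it is `true`. If that state is not `qg`, the one-agent population of
`qg` never outputs `true`. Otherwise a configuration stably outputs `true` only if every agent
is in state `qg`. On the path `g g r` either the all-`g` configuration is unreachable, and then
this `g`-majority input never stabilises, or it is reachable, and then on the path of five
agents the `r`-majority input `g g r r r` reaches the `g`-majority input `g g g r r`. If a
configuration stably outputting `false` is reachable from `g g g r r`, a fair execution through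
it defeats the input `g g g r r`; if not, a fair execution through `g g g r r` defeats
`g g r r r`. Fair executions through any reachable configuration exist by a round-robin
schedule.
-/

open Relation Finset SimpleGraph

section FairExecution

lemma exists_fair_selector {α : Type*} [Finite α] (R : α → α → Prop) :
    ∃ sel : α → ℕ → α, (∀ a k, R a (sel a k) ∨ sel a k = a) ∧
      ∀ a b, R a b → ∀ n, ∃ k, n ≤ k ∧ sel a k = b := by
  classical
  have := Fintype.ofFinite α
  let succs : α → List α := fun a => ({b | R a b} : Finset α).toList
  have mem_succs {a b : α} : b ∈ succs a ↔ R a b := by simp [succs]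
  refine ⟨fun a k => (succs a).getD (k % (succs a).length) a, fun a k => ?_,
    fun a b hab n => ?_⟩ <;> beta_reduce
  · by_cases h : succs a = []
    · exact Or.inr (by simp [h])
    · have hk := Nat.mod_lt k (List.length_pos_iff.2 h)
      rw [List.getD_eq_getElem _ _ hk]
      exact Or.inl (mem_succs.1 (List.getElem_mem hk))
  · have hb : (succs a).idxOf b < (succs a).length := List.idxOf_lt_length_iff.2 (mem_succs.2 hab)
    refine ⟨(succs a).idxOf b + (succs a).length * n, ?_, ?_⟩
    · have := Nat.le_mul_of_pos_left n (Nat.zero_lt_of_lt hb)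
      omega
    · simp only [Nat.add_mul_mod_self_left, Nat.mod_eq_of_lt hb, List.getD_eq_getElem _ _ hb,
        List.getElem_idxOf hb]

section Run

variable {α : Type*} [DecidableEq α] (sel : α → ℕ → α) (a : α)

/-- Together with the position, the number of earlier visits of every state. -/
def selRunAux : ℕ → α × (α → ℕ)
  | 0 => (a, fun _ => 0)
  | t + 1 =>
    let s := selRunAux t
    (sel s.1 (s.2 s.1), Function.update s.2 s.1 (s.2 s.1 + 1))

/-- The run that leaves a state `c` on its `k`-th visit towards `sel c k`. -/
def selRun (t : ℕ) : α := (selRunAux sel a t).1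

lemma selRunAux_snd (t : ℕ) (c : α) :
    (selRunAux sel a t).2 c = Nat.count (fun s => selRun sel a s = c) t := by
  induction t generalizing c with
  | zero => rfl
  | succ t ih =>
    rw [Nat.count_succ, ← ih]
    change Function.update (selRunAux sel a t).2 (selRun sel a t) _ c = _
    rw [Function.update_apply]
    by_cases h : c = selRun sel a t
    · rw [if_pos h, if_pos h.symm, h]
      rfl
    · rw [if_neg h, if_neg (Ne.symm h), add_zero]

lemma selRun_succ (t : ℕ) :
    selRun sel a (t + 1) =
      sel (selRun sel a t) (Nat.count (fun s => selRun sel a s = selRun sel a t) t) := by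
  rw [← selRunAux_snd]
  rfl

end Run

variable {V Q : Type*} {E : V → V → Prop} {δ : Q × Q → Q × Q}

lemma ppExec_selRun [DecidableEq (V → Q)] {sel : (V → Q) → ℕ → V → Q}
    (hsel : ∀ C k, PPStep E δ C (sel C k) ∨ sel C k = C) (C0 : V → Q) :
    PPExec E δ (selRun sel C0) := fun t => by
  rw [selRun_succ]
  exact hsel _ _

lemma ppFair_selRun [DecidableEq (V → Q)] {sel : (V → Q) → ℕ → V → Q}
    (hsel : ∀ C C', PPStep E δ C C' → ∀ n, ∃ k, n ≤ k ∧ sel C k = C') (C0 : V → Q) :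
    PPFair E δ (selRun sel C0) := by
  intro C C' hC hstep n
  obtain ⟨k, hnk, hk⟩ := hsel C C' hstep n
  set p : ℕ → Prop := fun s => selRun sel C0 s = C
  have hp : (Set.ofPred p).Infinite :=
    Set.infinite_of_forall_exists_gt fun m => (hC (m + 1)).imp fun t ht => ⟨ht.2, ht.1⟩
  have hvisit : selRun sel C0 (Nat.nth p k) = C := Nat.nth_mem_of_infinite hp k
  refine ⟨Nat.nth p k + 1, by linarith [(Nat.nth_strictMono hp).le_apply (x := k)], ?_⟩
  rw [selRun_succ, hvisit, Nat.count_nth_of_infinite hp k, hk]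

lemma exists_ppFair [Finite V] [Finite Q] (C0 : V → Q) :
    ∃ e : ℕ → V → Q, e 0 = C0 ∧ PPExec E δ e ∧ PPFair E δ e := by
  classical
  have := Fintype.ofFinite V
  obtain ⟨sel, hstep, hfair⟩ := exists_fair_selector (PPStep E δ)
  exact ⟨selRun sel C0, rfl, ppExec_selRun hstep C0, ppFair_selRun hfair C0⟩

lemma PPExec.cons {C0 : V → Q} {e : ℕ → V → Q} (h : PPStep E δ C0 (e 0))
    (he : PPExec E δ e) :
    PPExec E δ (fun t => Nat.casesOn t C0 e) := fun t => by
  cases t with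
  | zero => exact Or.inl h
  | succ t => exact he t

lemma PPFair.cons {C0 : V → Q} {e : ℕ → V → Q} (he : PPFair E δ e) :
    PPFair E δ (fun t => Nat.casesOn t C0 e) := by
  intro C C' hC hstep n
  have hC' (m : ℕ) : ∃ t, m ≤ t ∧ e t = C := by
    obtain ⟨_ | t, hmt, ht⟩ := hC (m + 1)
    · omega
    · exact ⟨t, by omega, ht⟩
  obtain ⟨t, hnt, ht⟩ := he C C' hC' hstep n
  exact ⟨t + 1, by omega, ht⟩

lemma exists_ppFair_through [Finite V] [Finite Q] {C0 C1 : V → Q}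
    (h : ReflTransGen (PPStep E δ) C0 C1) :
    ∃ (e : ℕ → V → Q) (T : ℕ),
      e 0 = C0 ∧ e T = C1 ∧ PPExec E δ e ∧ PPFair E δ e := by
  induction h using ReflTransGen.head_induction_on with
  | refl =>
    obtain ⟨e, he0, hexec, hfair⟩ := exists_ppFair (E := E) (δ := δ) C1
    exact ⟨e, 0, he0, he0, hexec, hfair⟩
  | head hstep _ ih =>
    obtain ⟨e, T, he0, heT, hexec, hfair⟩ := ih
    exact ⟨_, T + 1, rfl, heT, hexec.cons (he0 ▸ hstep), hfair.cons⟩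

lemma PPExec.reflTransGen {e : ℕ → V → Q} (he : PPExec E δ e) {s t : ℕ} (hst : s ≤ t) :
    ReflTransGen (PPStep E δ) (e s) (e t) := by
  induction t, hst using Nat.le_induction with
  | base => rfl
  | succ t _ ih => exact (he t).elim ih.tail fun h => h ▸ ih

end FairExecution

section StableOutput

variable {V Q : Type*} {E : V → V → Prop} {δ : Q × Q → Q × Q} {γ : Q → Bool} {b : Bool}
  {C C' : V → Q}

lemma PPStableOutput.of_reflTransGen (h : PPStableOutput E δ γ b C)
    (hCC' : ReflTransGen (PPStep E δ) C C') : PPStableOutput E δ γ b C' :=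
  fun _ h' => h _ (hCC'.trans h')

lemma PPStableOutput.unique [Nonempty V] {b' : Bool} (h : PPStableOutput E δ γ b C)
    (h' : PPStableOutput E δ γ b' C) : b = b' :=
  have v := Classical.arbitrary V
  (h C .refl v).symm.trans (h' C .refl v)

lemma PPStableOutput.eq_const {qg : Q} (hu : ∀ q, γ q = true → q = qg)
    (h : PPStableOutput E δ γ true C) : C = fun _ => qg :=
  funext fun v => hu _ (h C .refl v)

lemma ppStableOutput_not_iff :
    PPStableOutput E δ (fun q => !γ q) b C ↔ PPStableOutput E δ γ (!b) C := by
  simp only [PPStableOutput, Bool.not_eq_eq_eq_not]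

lemma exists_ppFair_not_stable [Finite V] [Finite Q] {C0 C1 : V → Q}
    (hreach : ReflTransGen (PPStep E δ) C0 C1)
    (hunstable : ∀ C, ReflTransGen (PPStep E δ) C1 C → ¬ PPStableOutput E δ γ b C) :
    ∃ e : ℕ → V → Q, e 0 = C0 ∧ PPExec E δ e ∧ PPFair E δ e ∧
      ∀ t, ¬ PPStableOutput E δ γ b (e t) := by
  obtain ⟨e, T, he0, heT, hexec, hfair⟩ := exists_ppFair_through hreach
  refine ⟨e, he0, hexec, hfair, fun t hstable => ?_⟩
  rcases le_total t T with h | h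
  · exact hunstable C1 .refl (hstable.of_reflTransGen (heT ▸ hexec.reflTransGen h))
  · exact hunstable _ (heT ▸ hexec.reflTransGen h) hstable

end StableOutput

section Extension

variable {V W Q : Type*} {E : V → V → Prop} {F : W → W → Prop} {δ : Q × Q → Q × Q}
  {f : V → W}

lemma PPStep.extend (hf : f.Injective) (hadj : ∀ v u, E v u → F (f v) (f u)) (B : W → Q)
    {C C' : V → Q} (h : PPStep E δ C C') :
    PPStep F δ (Function.extend f C B) (Function.extend f C' B) := by
  obtain ⟨v, u, hvu, hE, hδ, hrest⟩ := h
  refine ⟨f v, f u, hf.ne hvu, hadj v u hE, ?_, fun w hwv hwu => ?_⟩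
  · simpa only [hf.extend_apply] using hδ
  · by_cases hw : ∃ a, f a = w
    · obtain ⟨a, rfl⟩ := hw
      simp only [hf.extend_apply]
      exact hrest a (fun h => hwv (h ▸ rfl)) (fun h => hwu (h ▸ rfl))
    · simp only [Function.extend_apply' _ _ _ hw]

lemma Relation.ReflTransGen.ppStep_extend (hf : f.Injective)
    (hadj : ∀ v u, E v u → F (f v) (f u)) (B : W → Q) {C C' : V → Q}
    (h : ReflTransGen (PPStep E δ) C C') :
    ReflTransGen (PPStep F δ) (Function.extend f C B) (Function.extend f C' B) :=
  h.lift _ fun _ _ hstep => hstep.extend hf hadj B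

end Extension

section PathInputs

variable {Q : Type*}

def prefixConfig (qg qr : Q) (n m : ℕ) : Fin n → Q := fun v => if (v : ℕ) < m then qg else qr

lemma prefixConfig_mem (qg qr : Q) (n m : ℕ) (v : Fin n) :
    prefixConfig qg qr n m v = qg ∨ prefixConfig qg qr n m v = qr := by
  unfold prefixConfig
  split_ifs <;> simp

lemma prefixConfig_self (qg qr : Q) (n : ℕ) : prefixConfig qg qr n n = fun _ => qg :=
  funext fun v => if_pos v.isLt

variable {qg qr : Q}

lemma extend_prefixConfig {n n' m : ℕ} (hmn : m ≤ n) (hnn' : n ≤ n') :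
    Function.extend (Fin.castLE hnn') (prefixConfig qg qr n m) (fun _ => qr) =
      prefixConfig qg qr n' m := by
  funext w
  by_cases hw : (w : ℕ) < n
  · rw [show w = Fin.castLE hnn' ⟨w, hw⟩ from rfl, (Fin.castLE_injective hnn').extend_apply]
    rfl
  · rw [Function.extend_apply' _ _ _ (by rintro ⟨a, rfl⟩; exact hw a.isLt)]
    exact (if_neg (by omega)).symm

lemma reflTransGen_prefixConfig_pathGraph_of_le {δ : Q × Q → Q × Q} {n n' m m' : ℕ}
    (hm : m ≤ n) (hm' : m' ≤ n) (hnn' : n ≤ n')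
    (h : ReflTransGen (PPStep (pathGraph n).Adj δ) (prefixConfig qg qr n m)
      (prefixConfig qg qr n m')) :
    ReflTransGen (PPStep (pathGraph n').Adj δ) (prefixConfig qg qr n' m)
      (prefixConfig qg qr n' m') := by
  have hadj : ∀ v u, (pathGraph n).Adj v u → (pathGraph n').Adj (Fin.castLE hnn' v)
      (Fin.castLE hnn' u) := fun v u => by simp [pathGraph_adj]
  simpa only [extend_prefixConfig hm hnn', extend_prefixConfig hm' hnn'] using
    h.ppStep_extend (Fin.castLE_injective hnn') hadj (fun _ => qr)

variable [DecidableEq Q]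

lemma card_prefixConfig_left (hgr : qg ≠ qr) {n m : ℕ} (hmn : m ≤ n) :
    #{v | prefixConfig qg qr n m v = qg} = m := by
  simp_rw [prefixConfig, ite_eq_left_iff, fun v => imp_iff_not_or.trans (or_iff_left hgr.symm)]
  simp [Fin.card_filter_val_lt, hmn]

lemma card_prefixConfig_right (hgr : qg ≠ qr) {n m : ℕ} (hmn : m ≤ n) :
    #{v | prefixConfig qg qr n m v = qr} = n - m := by
  have hsplit := card_filter_add_card_filter_not (s := (univ : Finset (Fin n)))
    (fun v => prefixConfig qg qr n m v = qg)
  have hr : ∀ v, ¬ prefixConfig qg qr n m v = qg ↔ prefixConfig qg qr n m v = qr := fun v => by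
    rcases prefixConfig_mem qg qr n m v with h | h <;> simp [h, hgr, hgr.symm]
  simp only [hr, card_prefixConfig_left hgr hmn, card_univ, Fintype.card_fin] at hsplit
  omega

end PathInputs

section Majority

variable {Q : Type*} [DecidableEq Q]

def FailsMajority (δ : Q × Q → Q × Q) (qg qr : Q) (γ : Q → Bool) : Prop :=
  ∃ (n : ℕ) (G : SimpleGraph (Fin n)) (C0 : Fin n → Q) (e : ℕ → Fin n → Q),
    G.Connected ∧
    (∀ v : Fin n, C0 v = qg ∨ C0 v = qr) ∧
    (Finset.univ.filter fun v => C0 v = qg).card ≠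
      (Finset.univ.filter fun v => C0 v = qr).card ∧
    e 0 = C0 ∧ PPExec G.Adj δ e ∧ PPFair G.Adj δ e ∧
    ∀ t : ℕ, ¬ PPStableOutput G.Adj δ γ
      (decide ((Finset.univ.filter fun v => C0 v = qr).card <
               (Finset.univ.filter fun v => C0 v = qg).card)) (e t)

variable {δ : Q × Q → Q × Q} {qg qr : Q} {γ : Q → Bool}

lemma FailsMajority.of_swap (h : FailsMajority δ qr qg fun q => !γ q) :
    FailsMajority δ qg qr γ := by
  obtain ⟨n, G, C0, e, hG, hC0, hne, he0, hexec, hfair, hunstable⟩ := h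
  refine ⟨n, G, C0, e, hG, fun v => (hC0 v).symm, hne.symm, he0, hexec, hfair, fun t h => ?_⟩
  refine hunstable t (ppStableOutput_not_iff.2 ?_)
  convert h using 2
  rw [← decide_not]
  exact decide_eq_decide.2 (by omega)

variable [Fintype Q]

lemma failsMajority_of_path (hgr : qg ≠ qr) {n m : ℕ} (hmn : m ≤ n) (hne : n ≠ 2 * m)
    {C1 : Fin n → Q}
    (hreach : ReflTransGen (PPStep (pathGraph n).Adj δ) (prefixConfig qg qr n m) C1)
    (hunstable : ∀ C, ReflTransGen (PPStep (pathGraph n).Adj δ) C1 C →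
      ¬ PPStableOutput (pathGraph n).Adj δ γ (decide (n < 2 * m)) C) :
    FailsMajority δ qg qr γ := by
  obtain ⟨k, rfl⟩ : ∃ k, n = k + 1 := Nat.exists_eq_add_one.2 (by omega)
  obtain ⟨e, he0, hexec, hfair, hnot⟩ := exists_ppFair_not_stable hreach hunstable
  refine ⟨k + 1, pathGraph (k + 1), prefixConfig qg qr (k + 1) m, e, pathGraph_connected k,
    prefixConfig_mem qg qr _ m, ?_, he0, hexec, hfair, ?_⟩
  all_goals rw [card_prefixConfig_left hgr hmn, card_prefixConfig_right hgr hmn]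
  · omega
  · rwa [decide_eq_decide.2 (show k + 1 - m < m ↔ k + 1 < 2 * m by omega)]

lemma failsMajority_of_output_false (hgr : qg ≠ qr) (hg : γ qg = false) :
    FailsMajority δ qg qr γ := by
  refine failsMajority_of_path hgr (n := 1) (m := 1) le_rfl (by norm_num) .refl fun C hC h => ?_
  have hnostep : ∀ C', ¬ PPStep (pathGraph 1).Adj δ (prefixConfig qg qr 1 1) C' :=
    fun _ ⟨v, u, hvu, _⟩ => hvu (Subsingleton.elim v u)
  rw [reflTransGen_iff_eq hnostep] at hC
  have := h C .refl 0
  simp [hC, prefixConfig, hg] at this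

lemma failsMajority_of_forall_output_true_eq (hgr : qg ≠ qr)
    (hu : ∀ q, γ q = true → q = qg) :
    FailsMajority δ qg qr γ := by
  by_cases h3 : ReflTransGen (PPStep (pathGraph 3).Adj δ) (prefixConfig qg qr 3 2)
      (prefixConfig qg qr 3 3)
  · have h5 := reflTransGen_prefixConfig_pathGraph_of_le (n' := 5) (by norm_num) le_rfl
      (by norm_num) h3
    by_cases hfalse : ∃ C,
        ReflTransGen (PPStep (pathGraph 5).Adj δ) (prefixConfig qg qr 5 3) C ∧
        PPStableOutput (pathGraph 5).Adj δ γ false C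
    · obtain ⟨Cs, hCs, hstable⟩ := hfalse
      exact failsMajority_of_path hgr (m := 3) (by norm_num) (by norm_num) hCs
        fun C hC htrue => absurd ((hstable.of_reflTransGen hC).unique htrue) (by decide)
    · push Not at hfalse
      exact failsMajority_of_path hgr (m := 2) (by norm_num) (by norm_num) h5 hfalse
  · refine failsMajority_of_path hgr (n := 3) (m := 2) (by norm_num) (by norm_num) .refl
      fun C _ htrue => h3 ?_
    rwa [prefixConfig_self, ← htrue.eq_const hu]

lemma failsMajority_of_subsingleton (hgr : qg ≠ qr) (h : {q | γ q = true}.Subsingleton) :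
    FailsMajority δ qg qr γ := by
  cases hg : γ qg
  · exact failsMajority_of_output_false hgr hg
  · exact failsMajority_of_forall_output_true_eq hgr fun q hq => h hq hg

end Majority

lemma subsingleton_or_subsingleton_of_card_le_three {Q : Type*} [Fintype Q]
    (hQ : Fintype.card Q ≤ 3) (f : Q → Bool) :
    {q | f q = true}.Subsingleton ∨ {q | f q = false}.Subsingleton := by
  classical
  have hsplit := card_filter_add_card_filter_not (s := (univ : Finset Q)) (fun q => f q = true)
  simp only [Bool.not_eq_true, card_univ] at hsplit
  rcases (by omega : #{q | f q = true} ≤ 1 ∨ #{q | f q = false} ≤ 1) with h | h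
  · exact .inl fun a ha b hb => card_le_one.1 h a (by simpa using ha) b (by simpa using hb)
  · exact .inr fun a ha b hb => card_le_one.1 h a (by simpa using ha) b (by simpa using hb)

/-- No population protocol with exactly 3 states stably computes majority on every
connected interaction graph: for every 3-element state set `Q`, transition function `δ`,
distinct input states `qg ≠ qr` and output function `γ : Q → Bool` (`true` = "g wins",
`false` = "r wins"), there are a connected graph, an initial configuration using only
`qg, qr` with a strict majority, and a fair execution from it that never reaches a
configuration from which all reachable configurations output the initial majority. -/
theorem stmt_8 (Q : Type) [Fintype Q] [DecidableEq Q] (hQ : Fintype.card Q = 3)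
    (δ : Q × Q → Q × Q) (qg qr : Q) (hgr : qg ≠ qr) (γ : Q → Bool) :
    ∃ (n : ℕ) (G : SimpleGraph (Fin n)) (C0 : Fin n → Q) (e : ℕ → Fin n → Q),
      G.Connected ∧
      (∀ v : Fin n, C0 v = qg ∨ C0 v = qr) ∧
      (Finset.univ.filter fun v => C0 v = qg).card ≠
        (Finset.univ.filter fun v => C0 v = qr).card ∧
      e 0 = C0 ∧ PPExec G.Adj δ e ∧ PPFair G.Adj δ e ∧
      ∀ t : ℕ, ¬ PPStableOutput G.Adj δ γ
        (decide ((Finset.univ.filter fun v => C0 v = qr).card <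
                 (Finset.univ.filter fun v => C0 v = qg).card)) (e t) := by
  show FailsMajority δ qg qr γ
  rcases subsingleton_or_subsingleton_of_card_le_three hQ.le γ with htrue | hfalse
  · exact failsMajority_of_subsingleton hgr htrue
  · exact .of_swap (failsMajority_of_subsingleton hgr.symm (by simpa using hfalse))
end

section
/- For every connected undirected interaction graph G = (V, E) and every initial configuration C_0 of the 4-state ambassador protocol in which each vertex is in state (g,1) or (r,1) and the number of vertices in state (g,1) differs from the number in state (r,1), every fair execution starting from C_0 eventually reaches a configuration C such that in C and in every configuration reachable from C, the colour component of every vertex equals the initial majority colour. In other words, the ambassador protocol stably computes the initial majority value. -/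
/-!
Let `m` be the initial majority colour and give each ambassador charge `+1` if it has colour `m`
and `-1` otherwise. Interactions conserve the total charge, which is initially positive, so a
majority ambassador always exists. It can walk along a path to any wrongly coloured vertex,
recolouring the vertices it enters, until it recolours that vertex or annihilates a minority
ambassador; either way the defect (wrongly coloured vertices, those holding a minority ambassador
counted twice) drops. So an all-`m` configuration is reachable from every reachable configuration,
and such configurations are closed under interactions. As there are finitely many configurations,
one recurs infinitely often in the execution; by fairness so does every configuration reachable
from it, in particular an all-`m` one.
-/

/-- States of the ambassador protocol: a colour (`true` = green `g`, `false` = red `r`)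
together with an ambassador bit (`true` = the vertex holds an ambassador). -/
abbrev AmbState : Type := Bool × Bool

/-- The transition function of the 4-state ambassador protocol: an ambassador moves to a
non-ambassador vertex and recolours it with its own colour; two opposite-coloured
ambassadors annihilate (colours unchanged); nothing else changes. -/
def ambDelta : AmbState × AmbState → AmbState × AmbState
  | ((c, true), (_, false)) => ((c, false), (c, true))
  | ((_, false), (c', true)) => ((c', true), (c', false))
  | ((c, true), (c', true)) =>
      if c = c' then ((c, true), (c', true)) else ((c, false), (c', false))
  | (s, s') => (s, s')

open Finset Function Filter

theorem Relation.ReflTransGen.of_step_closed {α : Type*} {r : α → α → Prop} {p : α → Prop}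
    (hp : ∀ a b, r a b → p a → p b) {a b : α} (h : Relation.ReflTransGen r a b) (ha : p a) :
    p b := by
  induction h with
  | refl => exact ha
  | tail _ hstep ih => exact hp _ _ hstep ih

section PopulationProtocol

variable {V Q : Type*} {E : V → V → Prop} {δ : Q × Q → Q × Q}

theorem sum_add_eq_sum_add_of_eq_off_pair {M : Type*} [Fintype V] [AddCommMonoid M]
    {f g : V → M} {v u : V} (hvu : v ≠ u) (h : ∀ w, w ≠ v → w ≠ u → f w = g w) :
    ∑ z, f z + (g v + g u) = ∑ z, g z + (f v + f u) := by
  classical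
  have hu : u ∈ univ.erase v := mem_erase.2 ⟨hvu.symm, mem_univ u⟩
  have split : ∀ k : V → M, ∑ z, k z = k v + k u + ∑ z ∈ (univ.erase v).erase u, k z := by
    intro k
    rw [add_assoc, add_sum_erase _ _ hu, add_sum_erase _ _ (mem_univ v)]
  have hrest : ∑ z ∈ (univ.erase v).erase u, f z = ∑ z ∈ (univ.erase v).erase u, g z :=
    sum_congr rfl fun w hw => by
      simp only [mem_erase] at hw
      exact h w hw.2.1 hw.1
  rw [split f, split g, hrest]
  abel

theorem ppStep_update_update [DecidableEq V] {C : V → Q} {v u : V} {x y : Q} (hvu : v ≠ u)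
    (hE : E v u) (hδ : δ (C v, C u) = (x, y)) :
    PPStep E δ C (update (update C v x) u y) := by
  refine ⟨v, u, hvu, hE, ?_, fun w hwv hwu => ?_⟩
  · rw [update_of_ne hvu, update_self, update_self, hδ]
  · rw [update_of_ne hwu, update_of_ne hwv]

theorem PPStep.sum_comp_eq [Fintype V] {M : Type*} [AddCommGroup M]
    {f : Q → M} (hf : ∀ x y, f (δ (x, y)).1 + f (δ (x, y)).2 = f x + f y) {C C' : V → Q}
    (h : PPStep E δ C C') : ∑ z, f (C' z) = ∑ z, f (C z) := by
  obtain ⟨v, u, hvu, -, hδ, hrest⟩ := h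
  have hpair := sum_add_eq_sum_add_of_eq_off_pair (f := fun z => f (C' z))
    (g := fun z => f (C z)) hvu fun w hwv hwu => by rw [hrest w hwv hwu]
  simp only [Prod.ext_iff] at hδ
  rw [hδ.1, hδ.2, hf] at hpair
  exact add_right_cancel hpair

theorem PPStep.forall_of_forall {P : Q → Prop}
    (hP : ∀ x y, P x → P y → P (δ (x, y)).1 ∧ P (δ (x, y)).2) {C C' : V → Q}
    (h : PPStep E δ C C') (hC : ∀ z, P (C z)) : ∀ z, P (C' z) := by
  obtain ⟨v, u, -, -, hδ, hrest⟩ := h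
  simp only [Prod.ext_iff] at hδ
  intro z
  by_cases hzv : z = v
  · subst hzv
    exact hδ.1 ▸ (hP _ _ (hC z) (hC u)).1
  by_cases hzu : z = u
  · subst hzu
    exact hδ.2 ▸ (hP _ _ (hC v) (hC z)).2
  exact hrest z hzv hzu ▸ hC z

theorem PPExec.of_step_closed {e : ℕ → V → Q} (hexec : PPExec E δ e) {I : (V → Q) → Prop}
    (hI : ∀ C C', PPStep E δ C C' → I C → I C') (h0 : I (e 0)) (t : ℕ) : I (e t) := by
  induction t with
  | zero => exact h0
  | succ t ih =>
    rcases hexec t with hstep | hstay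
    · exact hI _ _ hstep ih
    · exact hstay ▸ ih

theorem PPFair.frequently_of_reflTransGen {e : ℕ → V → Q} (hfair : PPFair E δ e)
    {C C' : V → Q} (hC : ∃ᶠ t in atTop, e t = C)
    (h : Relation.ReflTransGen (PPStep E δ) C C') : ∃ᶠ t in atTop, e t = C' := by
  induction h with
  | refl => exact hC
  | tail _ hstep ih =>
    exact frequently_atTop.2 (hfair _ _ (frequently_atTop.1 ih) hstep)

theorem PPFair.exists_forall_reflTransGen [Finite V] [Finite Q] {e : ℕ → V → Q}
    (hexec : PPExec E δ e) (hfair : PPFair E δ e) {I P : (V → Q) → Prop}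
    (hI : ∀ C C', PPStep E δ C C' → I C → I C')
    (hP : ∀ C C', PPStep E δ C C' → P C → P C') (h0 : I (e 0))
    (hreach : ∀ C, I C → ∃ C', Relation.ReflTransGen (PPStep E δ) C C' ∧ P C') :
    ∃ t, ∀ C', Relation.ReflTransGen (PPStep E δ) (e t) C' → P C' := by
  obtain ⟨C, hC⟩ := Finite.exists_infinite_fiber e
  have hCfreq : ∃ᶠ t in atTop, e t = C :=
    Nat.frequently_atTop_iff_infinite.2 (Set.infinite_coe_iff.1 hC)
  obtain ⟨t₀, rfl⟩ := hCfreq.exists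
  obtain ⟨C', hreach', hPC'⟩ := hreach _ (hexec.of_step_closed hI h0 t₀)
  obtain ⟨t, ht⟩ := (hfair.frequently_of_reflTransGen hCfreq hreach').exists
  refine ⟨t, fun C'' h => ?_⟩
  rw [ht] at h
  exact h.of_step_closed hP hPC'

end PopulationProtocol

def charge (m : Bool) (s : AmbState) : ℤ :=
  if s.2 then (if s.1 = m then 1 else -1) else 0

def defect (m : Bool) (s : AmbState) : ℕ :=
  if s.1 = m then 0 else if s.2 then 2 else 1

theorem charge_ambDelta (m : Bool) (x y : AmbState) :
    charge m (ambDelta (x, y)).1 + charge m (ambDelta (x, y)).2 = charge m x + charge m y := by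
  revert m x y; decide

theorem ambDelta_fst_eq (m : Bool) (x y : AmbState) (hx : x.1 = m) (hy : y.1 = m) :
    (ambDelta (x, y)).1.1 = m ∧ (ambDelta (x, y)).2.1 = m := by
  revert m x y; decide

@[simp]
theorem defect_self (m b : Bool) : defect m (m, b) = 0 := by
  simp [defect]

theorem defect_of_ne {m c : Bool} (hc : c ≠ m) (b : Bool) :
    defect m (c, b) = cond b 2 1 := by
  cases b <;> simp [defect, hc]

theorem defect_pos {m : Bool} {s : AmbState} (hs : s.1 ≠ m) : 0 < defect m s := by
  unfold defect
  split_ifs <;> simp_all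

theorem charge_nonpos_of_ne {m : Bool} {s : AmbState} (hs : s ≠ (m, true)) :
    charge m s ≤ 0 := by
  revert m s; decide

section Ambassador

variable {V : Type} [Fintype V] {G : SimpleGraph V}

theorem sum_defect_update_update [DecidableEq V] (m : Bool) (C : V → AmbState) {v u : V}
    (hvu : v ≠ u) (x y : AmbState) :
    ∑ z, defect m (update (update C v x) u y z) + (defect m (C v) + defect m (C u)) =
      ∑ z, defect m (C z) + (defect m x + defect m y) := by
  have := sum_add_eq_sum_add_of_eq_off_pair (f := fun z => defect m (update (update C v x) u y z))
    (g := fun z => defect m (C z)) hvu fun w hwv hwu => by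
      rw [update_of_ne hwu, update_of_ne hwv]
  simpa only [update_of_ne hvu, update_self] using this

theorem exists_reach_sum_defect_lt (m : Bool) {v u : V} (p : G.Walk v u) {C : V → AmbState}
    (hv : C v = (m, true)) (hu : (C u).1 ≠ m) :
    ∃ C', Relation.ReflTransGen (PPStep G.Adj ambDelta) C C' ∧
      ∑ z, defect m (C' z) < ∑ z, defect m (C z) := by
  classical
  induction p generalizing C with
  | nil => exact absurd (congrArg Prod.fst hv) hu
  | @cons v w u hadj q ih =>
    have hvu : u ≠ v := fun h => hu (h ▸ congrArg Prod.fst hv)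
    rcases hw : C w with ⟨c, _ | _⟩
    · have hdefect := sum_defect_update_update m C hadj.ne (m, false) (m, true)
      simp only [hv, hw, defect_self] at hdefect
      set C₁ := update (update C v (m, false)) w (m, true)
      have hstep : PPStep G.Adj ambDelta C C₁ :=
        ppStep_update_update hadj.ne hadj (by rw [hv, hw]; cases m <;> cases c <;> rfl)
      by_cases hwu : w = u
      · subst hwu
        have hc : 0 < defect m (c, false) := defect_pos (by simpa [hw] using hu)
        exact ⟨C₁, .single hstep, by omega⟩
      obtain ⟨C', hreach, hlt⟩ := ih (C := C₁) (by simp [C₁])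
        (by simpa [C₁, update_of_ne (Ne.symm hwu), update_of_ne hvu] using hu)
      exact ⟨C', .head hstep hreach, by omega⟩
    · by_cases hc : c = m
      · -- the majority ambassador at `w` takes over the walk
        exact ih (hc ▸ hw) hu
      have hdefect := sum_defect_update_update m C hadj.ne (m, false) (c, false)
      simp only [hv, hw, defect_self, defect_of_ne hc, cond_true, cond_false] at hdefect
      set C₁ := update (update C v (m, false)) w (c, false)
      have hstep : PPStep G.Adj ambDelta C C₁ :=
        ppStep_update_update hadj.ne hadj (by
          rw [hv, hw]; cases m <;> cases c <;> simp_all [ambDelta])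
      exact ⟨C₁, .single hstep, by omega⟩

theorem sum_charge_pos_of_ppStep {E : V → V → Prop} {m : Bool} {C C' : V → AmbState}
    (h : PPStep E ambDelta C C') (hC : 0 < ∑ z, charge m (C z)) : 0 < ∑ z, charge m (C' z) := by
  rwa [h.sum_comp_eq (charge_ambDelta m)]

theorem exists_eq_of_sum_charge_pos {m : Bool} {C : V → AmbState}
    (hC : 0 < ∑ z, charge m (C z)) : ∃ z, C z = (m, true) := by
  by_contra! h
  exact hC.not_ge (sum_nonpos fun z _ => charge_nonpos_of_ne (h z))

theorem exists_reach_forall_fst_eq (hconn : G.Connected) (m : Bool) (C : V → AmbState)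
    (hC : 0 < ∑ z, charge m (C z)) :
    ∃ C', Relation.ReflTransGen (PPStep G.Adj ambDelta) C C' ∧ ∀ z, (C' z).1 = m := by
  induction hn : ∑ z, defect m (C z) using Nat.strong_induction_on generalizing C with
  | _ n ih =>
    by_cases hmono : ∀ z, (C z).1 = m
    · exact ⟨C, .refl, hmono⟩
    push Not at hmono
    obtain ⟨u, hu⟩ := hmono
    obtain ⟨v, hv⟩ := exists_eq_of_sum_charge_pos hC
    obtain ⟨C₁, hreach₁, hlt⟩ :=
      exists_reach_sum_defect_lt m (hconn.preconnected v u).some hv hu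
    have hC₁ : 0 < ∑ z, charge m (C₁ z) :=
      hreach₁.of_step_closed (fun _ _ => sum_charge_pos_of_ppStep) hC
    obtain ⟨C', hreach', hC'⟩ := ih _ (hn ▸ hlt) C₁ hC₁ rfl
    exact ⟨C', hreach₁.trans hreach', hC'⟩

theorem sum_charge_majority_pos {C : V → AmbState} (hamb : ∀ v, (C v).2 = true)
    (hmaj : #{v | (C v).1 = true} ≠ #{v | (C v).1 = false}) :
    0 < ∑ z, charge (decide (#{v | (C v).1 = false} < #{v | (C v).1 = true})) (C z) := by
  simp only [charge, hamb, if_true]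
  rcases lt_or_gt_of_ne hmaj with hlt | hgt
  · rw [decide_eq_false (by omega)]
    simpa [sum_ite] using hlt
  · rw [decide_eq_true hgt]
    simpa [sum_ite] using hgt

end Ambassador

theorem stmt_9_general {V : Type} [Fintype V] (G : SimpleGraph V)
    (hconn : G.Connected) (C0 : V → AmbState)
    (hamb : ∀ v : V, (C0 v).2 = true)
    (hmaj : (Finset.univ.filter fun v => (C0 v).1 = true).card ≠
            (Finset.univ.filter fun v => (C0 v).1 = false).card)
    (e : ℕ → V → AmbState) (he0 : e 0 = C0)
    (hexec : PPExec G.Adj ambDelta e) (hfair : PPFair G.Adj ambDelta e) :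
    ∃ t : ℕ, ∀ C' : V → AmbState,
      Relation.ReflTransGen (PPStep G.Adj ambDelta) (e t) C' →
      ∀ v : V, (C' v).1 =
        decide ((Finset.univ.filter fun v => (C0 v).1 = false).card <
                (Finset.univ.filter fun v => (C0 v).1 = true).card) := by
  set m := decide ((Finset.univ.filter fun v => (C0 v).1 = false).card <
                (Finset.univ.filter fun v => (C0 v).1 = true).card)
  exact PPFair.exists_forall_reflTransGen hexec hfair (I := fun C => 0 < ∑ z, charge m (C z))
    (fun _ _ => sum_charge_pos_of_ppStep)
    (fun _ _ h hC => h.forall_of_forall (ambDelta_fst_eq m) hC)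
    (he0 ▸ sum_charge_majority_pos hamb hmaj)
    (exists_reach_forall_fst_eq hconn m)

/-- The ambassador protocol stably computes majority: on any finite connected undirected
graph, starting from a configuration in which every vertex holds an ambassador and the
numbers of green and red vertices differ, every fair execution eventually reaches a
configuration from which every reachable configuration (including itself) has every
vertex coloured with the initial majority colour. -/
theorem stmt_9 {V : Type} [Fintype V] [DecidableEq V] (G : SimpleGraph V)
    (hconn : G.Connected) (C0 : V → AmbState)
    (hamb : ∀ v : V, (C0 v).2 = true)
    (hmaj : (Finset.univ.filter fun v => (C0 v).1 = true).card ≠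
            (Finset.univ.filter fun v => (C0 v).1 = false).card)
    (e : ℕ → V → AmbState) (he0 : e 0 = C0)
    (hexec : PPExec G.Adj ambDelta e) (hfair : PPFair G.Adj ambDelta e) :
    ∃ t : ℕ, ∀ C' : V → AmbState,
      Relation.ReflTransGen (PPStep G.Adj ambDelta) (e t) C' →
      ∀ v : V, (C' v).1 =
        decide ((Finset.univ.filter fun v => (C0 v).1 = false).card <
                (Finset.univ.filter fun v => (C0 v).1 = true).card) :=
  stmt_9_general G hconn C0 hamb hmaj e he0 hexec hfair
end

section
/- Along any execution of the 4-state ambassador protocol on any interaction graph, the quantity (number of vertices in state (g,1)) − (number of vertices in state (r,1)) is invariant: if configuration C' is directly reachable from configuration C, then |{v : C'(v) = (g,1)}| − |{v : C'(v) = (r,1)}| = |{v : C(v) = (g,1)}| − |{v : C(v) = (r,1)}|. In particular, at any step of any execution this difference equals the difference between the initial number of green ambassadors and the initial number of red ambassadors. -/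
/-!
A step changes the states of just the two interacting vertices, so any weight on states
whose sum over an interacting pair is preserved by `δ` has a total over all vertices that
is preserved by the step. For the ambassador protocol, the weight `+1` on `(g,1)`, `-1` on
`(r,1)` and `0` elsewhere is preserved: an ambassador that moves keeps its colour, and
ambassadors only disappear in pairs of opposite colours.
-/

theorem PPStep.sum_weight_eq {V Q M : Type*} [Fintype V] [AddCommMonoid M]
    {E : V → V → Prop} {δ : Q × Q → Q × Q} {C C' : V → Q} (w : Q → M)
    (hδ : ∀ p, w (δ p).1 + w (δ p).2 = w p.1 + w p.2) (hstep : PPStep E δ C C') :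
    ∑ x, w (C' x) = ∑ x, w (C x) := by
  classical
  obtain ⟨v, u, hvu, -, hpair, hrest⟩ := hstep
  have split (D : V → Q) :
      ∑ x, w (D x) = (w (D v) + w (D u)) + ∑ x ∈ ({v, u} : Finset V)ᶜ, w (D x) := by
    rw [← Finset.sum_pair (f := fun x => w (D x)) hvu, Finset.sum_add_sum_compl]
  have hrest' : ∀ x ∈ ({v, u} : Finset V)ᶜ, w (C' x) = w (C x) := by
    intro x hx
    simp only [Finset.mem_compl, Finset.mem_insert, Finset.mem_singleton, not_or] at hx
    rw [hrest x hx.1 hx.2]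
  have hpair' : w (C' v) + w (C' u) = w (C v) + w (C u) := by
    simpa only [← hpair] using hδ (C v, C u)
  rw [split C', split C, Finset.sum_congr rfl hrest', hpair']

def ambCharge (q : AmbState) : ℤ :=
  (if q = (true, true) then 1 else 0) - (if q = (false, true) then 1 else 0)

theorem ambCharge_ambDelta (p : AmbState × AmbState) :
    ambCharge (ambDelta p).1 + ambCharge (ambDelta p).2 = ambCharge p.1 + ambCharge p.2 := by
  revert p
  decide

theorem sum_ambCharge {V : Type*} [Fintype V] (C : V → AmbState) :
    ∑ v, ambCharge (C v) =
      ((Finset.univ.filter fun v => C v = (true, true)).card : ℤ) -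
        ((Finset.univ.filter fun v => C v = (false, true)).card : ℤ) := by
  simp only [ambCharge, Finset.sum_sub_distrib, Finset.sum_boole]

theorem stmt_10_general {V : Type} [Fintype V] (E : V → V → Prop)
    (C C' : V → AmbState) (hstep : PPStep E ambDelta C C') :
    ((Finset.univ.filter fun v => C' v = (true, true)).card : ℤ) -
      ((Finset.univ.filter fun v => C' v = (false, true)).card : ℤ) =
    ((Finset.univ.filter fun v => C v = (true, true)).card : ℤ) -
      ((Finset.univ.filter fun v => C v = (false, true)).card : ℤ) := by
  rw [← sum_ambCharge, ← sum_ambCharge]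
  exact hstep.sum_weight_eq ambCharge ambCharge_ambDelta

/-- The crucial invariant of the ambassador protocol: the difference between the number
of green ambassadors (state `(g,1)`) and red ambassadors (state `(r,1)`) is preserved by
every interaction step, on any interaction graph. -/
theorem stmt_10 {V : Type} [Fintype V] [DecidableEq V] (E : V → V → Prop)
    (C C' : V → AmbState) (hstep : PPStep E ambDelta C C') :
    ((Finset.univ.filter fun v => C' v = (true, true)).card : ℤ) -
      ((Finset.univ.filter fun v => C' v = (false, true)).card : ℤ) =
    ((Finset.univ.filter fun v => C v = (true, true)).card : ℤ) -
      ((Finset.univ.filter fun v => C v = (false, true)).card : ℤ) :=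
  stmt_10_general E C C' hstep
end

section
/- Let G = (V, E) be a connected undirected graph and let C be a configuration of the 4-state ambassador protocol on G containing at least one vertex in state (g,1) and no vertex in state (r,1). Then there exists a finite sequence of configurations C = C^0, C^1, …, C^s, each directly reachable from the previous one, such that in C^s every vertex has colour component g (i.e. every vertex is in state (g,0) or (g,1)). -/
/-!
Every ambassador present is green and stays green, since only annihilation can remove one and
that needs a red partner. A green ambassador walking along a path recolours each vertex it
enters green and only ever leaves green vertices behind; when it runs into another ambassador,
that one is green too and takes over the walk. Since the graph is connected, some green
ambassador can be walked to each vertex in turn, and no vertex loses its green colour on the way.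
-/

section Greening

variable {V : Type}

def NoRedAmbassador (C : V → AmbState) : Prop :=
  ∀ v, C v ≠ (false, true)

def IsGreening (C C' : V → AmbState) : Prop :=
  ∀ v, C' v = C v ∨ (C' v).1 = true

theorem IsGreening.refl (C : V → AmbState) : IsGreening C C :=
  fun _ => .inl rfl

theorem IsGreening.trans {C₁ C₂ C₃ : V → AmbState} (h₁₂ : IsGreening C₁ C₂)
    (h₂₃ : IsGreening C₂ C₃) : IsGreening C₁ C₃ := by
  intro v
  rcases h₂₃ v with h | h
  · rw [h]
    rcases h₁₂ v with h' | h'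
    · exact .inl h'
    · exact .inr h'
  · exact .inr h

theorem IsGreening.green {C C' : V → AmbState} (h : IsGreening C C') {v : V}
    (hv : (C v).1 = true) : (C' v).1 = true := by
  rcases h v with h | h
  · rwa [h]
  · exact h

theorem NoRedAmbassador.of_isGreening {C C' : V → AmbState} (hC : NoRedAmbassador C)
    (h : IsGreening C C') : NoRedAmbassador C' := by
  intro v hv
  rcases h v with h | h
  · exact hC v (h ▸ hv)
  · simp [hv] at h

theorem NoRedAmbassador.eq_of_snd {C : V → AmbState} (hC : NoRedAmbassador C) {v : V}
    (hv : (C v).2 = true) : C v = (true, true) := by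
  have hvr := hC v
  revert hv hvr
  rcases C v with ⟨_ | _, _ | _⟩ <;> simp

end Greening

theorem PPStep.of_adj {V Q : Type*} [DecidableEq V] {E : V → V → Prop} (δ : Q × Q → Q × Q)
    (C : V → Q) {v u : V} (hvu : v ≠ u) (h : E v u) :
    PPStep E δ C (Function.update (Function.update C v (δ (C v, C u)).1) u (δ (C v, C u)).2) := by
  refine ⟨v, u, hvu, h, ?_, fun w hwv hwu => ?_⟩
  · simp [Function.update_of_ne hvu]
  · simp [Function.update_of_ne hwv, Function.update_of_ne hwu]

theorem ambDelta_green_ambassador_move (c : Bool) :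
    ambDelta ((true, true), (c, false)) = ((true, false), (true, true)) :=
  rfl

section Walk

variable {V : Type} {G : SimpleGraph V}

theorem exists_ppStep_move_green_ambassador {C : V → AmbState} {a b : V} (hab : G.Adj a b)
    (ha : C a = (true, true)) (hb : (C b).2 = false) :
    ∃ C', PPStep G.Adj ambDelta C C' ∧ IsGreening C C' ∧ C' b = (true, true) := by
  classical
  have hδ : ambDelta (C a, C b) = ((true, false), (true, true)) := by
    rw [ha, ← Prod.mk.eta (p := C b), hb]
    exact ambDelta_green_ambassador_move _
  have hstep := PPStep.of_adj ambDelta C hab.ne hab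
  rw [hδ] at hstep
  refine ⟨_, hstep, fun w => ?_, by simp⟩
  by_cases hwb : w = b
  · simp [hwb]
  by_cases hwa : w = a
  · simp [hwa, hab.ne]
  · simp [hwa, hwb]

theorem exists_reachable_green_ambassador_of_walk {a u : V} (p : G.Walk a u)
    (C : V → AmbState) (hC : NoRedAmbassador C) (ha : C a = (true, true)) :
    ∃ C', Relation.ReflTransGen (PPStep G.Adj ambDelta) C C' ∧ IsGreening C C' ∧
      C' u = (true, true) := by
  induction p generalizing C with
  | nil => exact ⟨C, .refl, .refl C, ha⟩
  | @cons a b u hab p ih =>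
    cases hb : (C b).2
    · obtain ⟨C₁, hstep, hgreen₁, hb₁⟩ := exists_ppStep_move_green_ambassador hab ha hb
      obtain ⟨C', hreach, hgreen, hu⟩ := ih C₁ (hC.of_isGreening hgreen₁) hb₁
      exact ⟨C', .head hstep hreach, hgreen₁.trans hgreen, hu⟩
    · exact ih C hC (hC.eq_of_snd hb)

theorem exists_reachable_green_on_finset (hconn : G.Preconnected) (C : V → AmbState)
    (hC : NoRedAmbassador C) (hg : ∃ v, C v = (true, true)) (S : Finset V) :
    ∃ C', Relation.ReflTransGen (PPStep G.Adj ambDelta) C C' ∧ IsGreening C C' ∧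
      (∃ a, C' a = (true, true)) ∧ ∀ v ∈ S, (C' v).1 = true := by
  classical
  induction S using Finset.induction with
  | empty => exact ⟨C, .refl, .refl C, hg, by simp⟩
  | @insert x S _ ih =>
    obtain ⟨C₁, hreach₁, hgreen₁, ⟨a, ha⟩, hS⟩ := ih
    obtain ⟨p⟩ := hconn a x
    obtain ⟨C₂, hreach₂, hgreen₂, hx⟩ :=
      exists_reachable_green_ambassador_of_walk p C₁ (hC.of_isGreening hgreen₁) ha
    refine ⟨C₂, hreach₁.trans hreach₂, hgreen₁.trans hgreen₂, ⟨x, hx⟩, ?_⟩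
    simp only [Finset.forall_mem_insert, hx, true_and]
    exact fun v hv => hgreen₂.green (hS v hv)

end Walk

theorem stmt_12_general {V : Type} [Fintype V] (G : SimpleGraph V)
    (hconn : G.Connected) (C : V → AmbState)
    (hg : ∃ v : V, C v = (true, true)) (hr : ∀ v : V, C v ≠ (false, true)) :
    ∃ C' : V → AmbState,
      Relation.ReflTransGen (PPStep G.Adj ambDelta) C C' ∧
      ∀ v : V, (C' v).1 = true := by
  obtain ⟨C', hreach, -, -, hall⟩ :=
    exists_reachable_green_on_finset hconn.preconnected C hr hg Finset.univ
  exact ⟨C', hreach, fun v => hall v (Finset.mem_univ v)⟩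

/-- From any configuration of the ambassador protocol on a connected graph containing at
least one green ambassador and no red ambassador, a finite chain of interaction steps
reaches a configuration in which every vertex is coloured green. -/
theorem stmt_12 {V : Type} [Fintype V] [DecidableEq V] (G : SimpleGraph V)
    (hconn : G.Connected) (C : V → AmbState)
    (hg : ∃ v : V, C v = (true, true)) (hr : ∀ v : V, C v ≠ (false, true)) :
    ∃ C' : V → AmbState,
      Relation.ReflTransGen (PPStep G.Adj ambDelta) C C' ∧
      ∀ v : V, (C' v).1 = true :=
  stmt_12_general G hconn C hg hr
end
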